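/- arXiv:2410.15543 — 2 statements merged into one kernel-verified Lean document; each statement's English description precedes it below -/
import Mathlib

section
/- Let σ_ε > 0 and let σ_0², ..., σ_{n-1}² be reals in [0,1]. If Ψ is any real number with Ψ ≥ (1/2)·∑_{j=1}^n log(1 + σ_ε^{-2}·σ_{j-1}²), then ∑_{j=1}^n σ_{j-1}² ≤ 2Ψ / log(1 + σ_ε^{-2}). -/
open Real Finset

/-- For `σ_ε > 0` and `σ_{j-1}² ∈ [0,1]`, if
`Ψ ≥ (1/2)·∑_j log(1 + σ_ε⁻²·σ_{j-1}²)` then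
`∑_j σ_{j-1}² ≤ 2Ψ / log(1 + σ_ε⁻²)`. -/
theorem stmt_5 (n : ℕ) (σε : ℝ) (hσε : 0 < σε) (s : Fin n → ℝ)
    (hs0 : ∀ j, 0 ≤ s j) (hs1 : ∀ j, s j ≤ 1) (Ψ : ℝ)
    (hΨ : (1 / 2) * ∑ j, Real.log (1 + σε ^ (-2 : ℤ) * s j) ≤ Ψ) :
    ∑ j, s j ≤ 2 * Ψ / Real.log (1 + σε ^ (-2 : ℤ)) := by
  set c : ℝ := σε ^ (-2 : ℤ) with hc
  have hcpos : 0 < c := zpow_pos hσε _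
  have hL : 0 < Real.log (1 + c) := Real.log_pos (by linarith)
  have key : ∀ j, s j * Real.log (1 + c) ≤ Real.log (1 + c * s j) := by
    intro j
    have hb := rpow_one_add_le_one_add_mul_self (s := c) (by linarith)
      (hs0 j) (hs1 j)
    calc s j * Real.log (1 + c) = Real.log ((1 + c) ^ (s j)) := by
          rw [Real.log_rpow (by linarith)]
      _ ≤ Real.log (1 + c * s j) := by
          apply Real.log_le_log (Real.rpow_pos_of_pos (by linarith) _)
          linarith [hb, mul_comm (s j) c]
  have hsum : (∑ j, s j) * Real.log (1 + c) ≤ 2 * Ψ := by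
    rw [Finset.sum_mul]
    calc ∑ j, s j * Real.log (1 + c) ≤ ∑ j, Real.log (1 + c * s j) :=
          Finset.sum_le_sum fun j _ => key j
      _ ≤ 2 * Ψ := by linarith
  rw [le_div_iff₀ hL]
  exact hsum
end

section
/- For σ_ε > 0 and σ_{j-1}²(x_j) ∈ [0,1] for j = 1,...,n, if Ψ_n ≥ (1/2)∑_{j=1}^n log(1 + σ_ε^{-2}σ_{j-1}²(x_j)) then (∑_{j=1}^n σ_{j-1}(x_j))² ≤ n · 2Ψ_n / log(1 + σ_ε^{-2}). -/
open Real Finset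

lemma aux_log_bound {c s : ℝ} (hc : 0 < c) (hs0 : 0 ≤ s) (hs1 : s ≤ 1) :
    s * Real.log (1 + c) ≤ Real.log (1 + c * s) := by
  have hconc := strictConcaveOn_log_Ioi.concaveOn
  rcases eq_or_lt_of_le hs0 with h0 | h0
  · simp [← h0]
  rcases eq_or_lt_of_le hs1 with h1 | h1
  · simp [h1, mul_comm]
  have := hconc.2 (Set.mem_Ioi.2 (by linarith : (0:ℝ) < 1 + c))
    (Set.mem_Ioi.2 one_pos) (le_of_lt h0) (by linarith : (0:ℝ) ≤ 1 - s) (by ring)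
  simp only [smul_eq_mul, Real.log_one, mul_zero, add_zero] at this
  calc s * Real.log (1 + c) ≤ Real.log (s * (1 + c) + (1 - s) * 1) := this
    _ = Real.log (1 + c * s) := by ring_nf

/-- For `σ_ε > 0` and posterior standard deviations `σ_j ≥ 0` with
`σ_j² ∈ [0,1]`, if `Ψ_n ≥ (1/2)∑_j log(1 + σ_ε⁻²·σ_j²)`, then
`(∑_j σ_j)² ≤ n·2Ψ_n/log(1 + σ_ε⁻²)`. -/
theorem stmt_16 (n : ℕ) (σε : ℝ) (hσε : 0 < σε) (σ : Fin n → ℝ)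
    (hσ0 : ∀ j, 0 ≤ σ j) (hσ1 : ∀ j, (σ j) ^ 2 ≤ 1) (Ψ : ℝ)
    (hΨ : (1 / 2) * ∑ j, Real.log (1 + σε ^ (-2 : ℤ) * (σ j) ^ 2) ≤ Ψ) :
    (∑ j, σ j) ^ 2 ≤ (n : ℝ) * (2 * Ψ) / Real.log (1 + σε ^ (-2 : ℤ)) := by
  set c : ℝ := σε ^ (-2 : ℤ) with hc
  have hcpos : 0 < c := by positivity
  have hlogpos : 0 < Real.log (1 + c) := Real.log_pos (by linarith)
  have hCS : (∑ j, σ j) ^ 2 ≤ (n : ℝ) * ∑ j, (σ j) ^ 2 := by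
    have := sq_sum_le_card_mul_sum_sq (s := Finset.univ) (f := σ)
    simpa using this
  have hterm : ∀ j, (σ j) ^ 2 * Real.log (1 + c) ≤ Real.log (1 + c * (σ j) ^ 2) :=
    fun j => aux_log_bound hcpos (sq_nonneg _) (hσ1 j)
  have hsum : (∑ j, (σ j) ^ 2) * Real.log (1 + c) ≤ 2 * Ψ := by
    rw [Finset.sum_mul]
    calc ∑ j, (σ j) ^ 2 * Real.log (1 + c)
        ≤ ∑ j, Real.log (1 + c * (σ j) ^ 2) :=
          Finset.sum_le_sum fun j _ => hterm j
      _ ≤ 2 * Ψ := by linarith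
  have h2 : (∑ j, (σ j) ^ 2) ≤ 2 * Ψ / Real.log (1 + c) :=
    (le_div_iff₀ hlogpos).2 hsum
  calc (∑ j, σ j) ^ 2 ≤ (n : ℝ) * ∑ j, (σ j) ^ 2 := hCS
    _ ≤ (n : ℝ) * (2 * Ψ / Real.log (1 + c)) := by
        apply mul_le_mul_of_nonneg_left h2 (Nat.cast_nonneg n)
    _ = (n : ℝ) * (2 * Ψ) / Real.log (1 + c) := by ring
end
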